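/- arXiv:2107.00081 — 3 statements merged into one kernel-verified Lean document; each statement's English description precedes it below -/
import Mathlib

section
/- Let u ∈ W^{1,∞}(Ω) ∩ C(cl(Ω)) be differentiable at x₀ ∈ Ω, with gradient Du(x₀). Then H(x₀, Du(x₀)) ≥ H(x₀, Du)(x₀). -/
open Set Filter Topology MeasureTheory
open scoped Pointwise ENNReal

noncomputable section

abbrev Euc (d : ℕ) := EuclideanSpace ℝ (Fin d)

structure SupSetup (d : ℕ) where
  Ω : Set (Euc d)
  H : Euc d → Euc d → ℝ
  isOpen_Ω : IsOpen Ω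
  isBounded_Ω : Bornology.IsBounded Ω
  isConnected_Ω : IsConnected Ω
  H_nonneg : ∀ x ∈ Ω, ∀ p : Euc d, 0 ≤ H x p
  H_zero : ∀ x ∈ Ω, H x 0 = 0
  H_quasiconvex : ∀ x ∈ Ω, ∀ lam : ℝ, Convex ℝ {p : Euc d | H x p ≤ lam}
  H_coercive : ∀ lam : ℝ, ∃ M : ℝ, 0 ≤ M ∧ ∀ x ∈ Ω, ∀ p : Euc d, H x p ≤ lam → ‖p‖ ≤ M
  H_cont : ContinuousOn (fun z : Euc d × Euc d => H z.1 z.2) (Ω ×ˢ (univ : Set (Euc d)))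
  H_D : ∀ lam mu : ℝ, 0 ≤ mu → mu < lam → ∃ α > (0:ℝ), ∀ x ∈ Ω,
      {p : Euc d | H x p ≤ mu} + Metric.ball (0 : Euc d) α ⊆ {p : Euc d | H x p ≤ lam}
  H_E : ∀ β > (0:ℝ), ∀ lam > (0:ℝ), ∀ V : Set (Euc d), IsOpen V → closure V ⊆ Ω →
      ∃ δ > (0:ℝ), ∀ lam' : ℝ, |lam - lam'| < δ → ∀ x ∈ V,
        {p : Euc d | H x p < lam} ⊆ {p : Euc d | H x p < lam'} + Metric.ball (0 : Euc d) β

variable {d : ℕ}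

/-- The quasi-convex conjugate `L_λ(x,q) = sup { p·q : H(x,p) ≤ λ }`. -/
def Lfun (S : SupSetup d) (lam : ℝ) (x q : Euc d) : ℝ :=
  sSup ((fun p : Euc d => (inner ℝ p q : ℝ)) '' {p : Euc d | S.H x p ≤ lam})

/-- A Lipschitz path from `x` to `y` with image (on `[0,1]`) inside `A`. -/
def IsPathIn (A : Set (Euc d)) (x y : Euc d) (γ : ℝ → Euc d) : Prop :=
  (∃ K : NNReal, LipschitzWith K γ) ∧ (∀ t ∈ Icc (0:ℝ) 1, γ t ∈ A) ∧ γ 0 = x ∧ γ 1 = y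

/-- The energy `∫₀¹ L_λ(γ(t), γ'(t)) dt` of a path. -/
def energy (S : SupSetup d) (lam : ℝ) (γ : ℝ → Euc d) : ℝ :=
  ∫ t in Ioo (0:ℝ) 1, Lfun S lam (γ t) (deriv γ t)

/-- The pseudo-distance `d_λ` on `Ω`. -/
def pdist (S : SupSetup d) (lam : ℝ) (x y : Euc d) : ℝ≥0∞ :=
  ⨅ (γ : ℝ → Euc d) (_ : IsPathIn S.Ω x y γ), ENNReal.ofReal (energy S lam γ)

/-- The extension of the pseudo-distance `d_λ` to the closure of `Ω`. -/
def pdistCl (S : SupSetup d) (lam : ℝ) (x y : Euc d) : ℝ≥0∞ :=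
  ⨅ (xs : ℕ → Euc d) (ys : ℕ → Euc d) (_ : ∀ n, xs n ∈ S.Ω) (_ : ∀ n, ys n ∈ S.Ω)
    (_ : Tendsto xs atTop (𝓝 x)) (_ : Tendsto ys atTop (𝓝 y)),
    Filter.liminf (fun n => pdist S lam (xs n) (ys n)) atTop

/-- `u ∈ W^{1,∞}(Ω)`: a uniform bound on the a.e. gradient, encoded as uniform local
Lipschitz continuity. -/
def W1inf (Ω : Set (Euc d)) (u : Euc d → ℝ) : Prop :=
  ∃ K : NNReal, ∀ x ∈ Ω, ∃ ε > (0:ℝ), Metric.ball x ε ⊆ Ω ∧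
    LipschitzOnWith K u (Metric.ball x ε)

/-- `u ∈ W^{1,∞}(Ω) ∩ C(cl Ω)`. -/
def W1infC (S : SupSetup d) (u : Euc d → ℝ) : Prop :=
  W1inf S.Ω u ∧ ContinuousOn u (closure S.Ω)

/-- The supremal functional `F(u) = esssup_{x ∈ Ω} H(x, Du(x))`. -/
def Fval (S : SupSetup d) (u : Euc d → ℝ) : ℝ :=
  essSup (fun x => S.H x (gradient u x)) (volume.restrict S.Ω)

/-- The supremal functional localized on `V`. -/
def FvalOn (S : SupSetup d) (V : Set (Euc d)) (u : Euc d → ℝ) : ℝ :=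
  essSup (fun x => S.H x (gradient u x)) (volume.restrict V)

/-- Admissible competitor for problem (P) with boundary datum `g`. -/
def IsAdmissible (S : SupSetup d) (g u : Euc d → ℝ) : Prop :=
  W1infC S u ∧ ∀ x ∈ frontier S.Ω, u x = g x

/-- Minimizer of problem (P). -/
def IsMinimizer (S : SupSetup d) (g u : Euc d → ℝ) : Prop :=
  IsAdmissible S g u ∧ ∀ v : Euc d → ℝ, IsAdmissible S g v → Fval S u ≤ Fval S v

/-- Absolute minimizer of problem (P). -/
def IsAbsMinimizer (S : SupSetup d) (g u : Euc d → ℝ) : Prop :=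
  IsAdmissible S g u ∧
  ∀ V : Set (Euc d), IsOpen V → V.Nonempty → closure V ⊆ S.Ω →
    ∀ v : Euc d → ℝ,
      (W1inf V v ∧ ContinuousOn v (closure V)) →
      (∀ x ∈ frontier V, v x = u x) →
      FvalOn S V u ≤ FvalOn S V v

/-- The set of `λ ≥ 0` such that `g(y) - g(x) ≤ d_λ(x,y)` for all boundary points. -/
def bLam (S : SupSetup d) (g : Euc d → ℝ) : Set ℝ :=
  {lam : ℝ | 0 ≤ lam ∧ ∀ x ∈ frontier S.Ω, ∀ y ∈ frontier S.Ω,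
    ENNReal.ofReal (g y - g x) ≤ pdistCl S lam x y}

/-- `μ = inf bLam`. -/
def muVal (S : SupSetup d) (g : Euc d → ℝ) : ℝ := sInf (bLam S g)

/-- `S⁻_λ(g)(x) = sup_{y ∈ ∂Ω} (g(y) - d_λ(x,y))`, as an extended real number. -/
def SminusE (S : SupSetup d) (g : Euc d → ℝ) (lam : ℝ) (x : Euc d) : EReal :=
  sSup {r : EReal | ∃ y ∈ frontier S.Ω, r = (g y : EReal) - ((pdistCl S lam x y : ℝ≥0∞) : EReal)}

/-- `S⁺_λ(g)(x) = inf_{y ∈ ∂Ω} (g(y) + d_λ(y,x))`, as an extended real number. -/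
def SplusE (S : SupSetup d) (g : Euc d → ℝ) (lam : ℝ) (x : Euc d) : EReal :=
  sInf {r : EReal | ∃ y ∈ frontier S.Ω, r = (g y : EReal) + ((pdistCl S lam y x : ℝ≥0∞) : EReal)}

/-- `μ(x₀,r) = inf {λ ≥ 0 : u(x) - u(x₀) ≤ d_λ(x₀,x) on B(x₀,r)}`. -/
def muFun (S : SupSetup d) (u : Euc d → ℝ) (x₀ : Euc d) (r : ℝ) : ℝ :=
  sInf {lam : ℝ | 0 ≤ lam ∧ ∀ x ∈ Metric.ball x₀ r,
    ENNReal.ofReal (u x - u x₀) ≤ pdist S lam x₀ x}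

/-- The pointwise value `H(x₀, Du)(x₀) = inf_{0 < r < dist(x₀,∂Ω)} μ(x₀,r)`. -/
def Hof (S : SupSetup d) (u : Euc d → ℝ) (x₀ : Euc d) : ℝ :=
  sInf (muFun S u x₀ '' Ioo 0 (Metric.infDist x₀ (frontier S.Ω)))

/-- The attainment set `A(w) = {x ∈ Ω : H(x,Dw)(x) = esssup H(·,Dw(·))}`. -/
def Aset (S : SupSetup d) (w : Euc d → ℝ) : Set (Euc d) :=
  {x ∈ S.Ω | Hof S w x = Fval S w}

/-- The `d_λ`-length of a curve (allowed to touch the boundary), computed with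
the extended pseudo-distance. -/
def dlength (S : SupSetup d) (lam : ℝ) (γ : ℝ → Euc d) : ℝ≥0∞ :=
  ⨆ (n : ℕ) (t : Fin (n + 1) → ℝ) (_ : Monotone t) (_ : t 0 = 0) (_ : t (Fin.last n) = 1),
    ∑ i : Fin n, pdistCl S lam (γ (t i.castSucc)) (γ (t i.succ))

/-- The `d_λ`-length of a curve inside `Ω`. -/
def dlenIn (S : SupSetup d) (lam : ℝ) (γ : ℝ → Euc d) : ℝ≥0∞ :=
  ⨆ (n : ℕ) (t : Fin (n + 1) → ℝ) (_ : Monotone t) (_ : t 0 = 0) (_ : t (Fin.last n) = 1),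
    ∑ i : Fin n, pdist S lam (γ (t i.castSucc)) (γ (t i.succ))

end


lemma lip_ftc {f : ℝ → ℝ} {K : NNReal} (hf : LipschitzWith K f) {a b : ℝ} (hab : a ≤ b) :
    f b - f a = ∫ t in Ioo a b, deriv f t := by
  have hfc : Continuous f := hf.continuous
  have hint : ∀ c d : ℝ, IntervalIntegrable f volume c d := fun c d => hfc.intervalIntegrable c d
  set h : ℕ → ℝ := fun n => 1 / (n + 1) with hh
  have hhpos : ∀ n, 0 < h n := fun n => by positivity
  have hh0 : Tendsto h atTop (𝓝 0) := tendsto_one_div_add_atTop_nhds_zero_nat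
  set g : ℕ → ℝ → ℝ := fun n t => (f (t + h n) - f t) / h n with hg
  have key : ∀ n, ∫ t in Ioo a b, g n t =
      ((∫ t in b..(b + h n), f t) - ∫ t in a..(a + h n), f t) / h n := by
    intro n
    rw [← MeasureTheory.integral_Ioc_eq_integral_Ioo, ← intervalIntegral.integral_of_le hab]
    have e1 : ∫ t in a..b, g n t = ((∫ t in a..b, f (t + h n)) - ∫ t in a..b, f t) / h n := by
      simp only [hg]
      rw [intervalIntegral.integral_div]
      congr 1
      exact intervalIntegral.integral_sub
        ((hfc.comp (by continuity)).intervalIntegrable _ _) (hint a b)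
    rw [e1, intervalIntegral.integral_comp_add_right]
    have h1 : (∫ t in a..(a + h n), f t) + (∫ t in (a + h n)..(b + h n), f t)
        = ∫ t in a..(b + h n), f t :=
      intervalIntegral.integral_add_adjacent_intervals (hint _ _) (hint _ _)
    have h2 : (∫ t in a..b, f t) + (∫ t in b..(b + h n), f t) = ∫ t in a..(b + h n), f t :=
      intervalIntegral.integral_add_adjacent_intervals (hint _ _) (hint _ _)
    congr 1
    linarith
  -- limit of endpoint quotients
  have endlim : ∀ c : ℝ, Tendsto (fun n => (∫ t in c..(c + h n), f t) / h n) atTop (𝓝 (f c)) := by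
    intro c
    have hD : HasDerivAt (fun x => ∫ t in c..x, f t) (f c) c :=
      intervalIntegral.integral_hasDerivAt_right (hint c c)
        (hfc.stronglyMeasurable.stronglyMeasurableAtFilter) hfc.continuousAt
    rw [hasDerivAt_iff_tendsto_slope] at hD
    have hseq : Tendsto (fun n => c + h n) atTop (𝓝[≠] c) := by
      apply tendsto_nhdsWithin_of_tendsto_nhds_of_eventually_within
      · simpa using (tendsto_const_nhds (x := c)).add hh0
      · exact Eventually.of_forall fun n => by
          simp only [mem_compl_iff, mem_singleton_iff]
          have := hhpos n; intro hc; nlinarith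
    have := hD.comp hseq
    refine this.congr fun n => ?_
    simp only [Function.comp, slope_def_field, intervalIntegral.integral_same]
    rw [div_eq_div_iff] <;> ring_nf
    · have := hhpos n; positivity
    · have := hhpos n; positivity
  have lim1 : Tendsto (fun n => ∫ t in Ioo a b, g n t) atTop (𝓝 (f b - f a)) := by
    simp only [key]
    have := ((endlim b).sub (endlim a))
    refine this.congr fun n => ?_
    rw [div_sub_div_same]
  have lim2 : Tendsto (fun n => ∫ t in Ioo a b, g n t) atTop
      (𝓝 (∫ t in Ioo a b, deriv f t)) := by
    refine tendsto_integral_of_dominated_convergence (fun _ => (K : ℝ)) ?_ ?_ ?_ ?_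
    · intro n
      exact ((hfc.comp (by continuity)).sub hfc).div_const _ |>.aestronglyMeasurable
    · exact integrableOn_const measure_Ioo_lt_top.ne enorm_ne_top
    · intro n
      refine Eventually.of_forall fun t => ?_
      have hd : dist (f (t + h n)) (f t) ≤ K * dist (t + h n) t := hf.dist_le_mul _ _
      rw [Real.dist_eq, Real.dist_eq] at hd
      have hpn := hhpos n
      rw [Real.norm_eq_abs, abs_div, abs_of_pos hpn]
      rw [div_le_iff₀ hpn]
      simpa [abs_of_pos hpn] using hd
    · have hae : ∀ᵐ t, DifferentiableAt ℝ f t := hf.ae_differentiableAt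
      refine ae_restrict_of_ae ?_
      filter_upwards [hae] with t ht
      have hD := ht.hasDerivAt
      rw [hasDerivAt_iff_tendsto_slope] at hD
      have hseq : Tendsto (fun n => t + h n) atTop (𝓝[≠] t) := by
        apply tendsto_nhdsWithin_of_tendsto_nhds_of_eventually_within
        · simpa using (tendsto_const_nhds (x := t)).add hh0
        · exact Eventually.of_forall fun n => by
            simp only [mem_compl_iff, mem_singleton_iff]
            have := hhpos n; intro hc; nlinarith
      have := hD.comp hseq
      refine this.congr fun n => ?_
      simp [Function.comp, slope_def_field, hg]
  exact tendsto_nhds_unique lim1 lim2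

section auxlem
variable {d : ℕ}

lemma H_slice_cont (S : SupSetup d) {x : Euc d} (hx : x ∈ S.Ω) :
    Continuous (fun p : Euc d => S.H x p) := by
  have hmap : ∀ p : Euc d, (x, p) ∈ S.Ω ×ˢ (univ : Set (Euc d)) :=
    fun p => ⟨hx, mem_univ p⟩
  exact S.H_cont.comp_continuous (by fun_prop) hmap

lemma sublevel_isCompact (S : SupSetup d) {x : Euc d} (hx : x ∈ S.Ω) {Λ M : ℝ}
    (hM : ∀ x ∈ S.Ω, ∀ p : Euc d, S.H x p ≤ Λ → ‖p‖ ≤ M) :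
    IsCompact {p : Euc d | S.H x p ≤ Λ} := by
  have hcl : IsClosed {p : Euc d | S.H x p ≤ Λ} :=
    isClosed_le (H_slice_cont S hx) continuous_const
  refine (isCompact_closedBall (0 : Euc d) M).of_isClosed_subset hcl ?_
  intro p hp
  simpa [Metric.mem_closedBall, dist_eq_norm] using hM x hx p hp

lemma sublevel_nonempty (S : SupSetup d) {x : Euc d} (hx : x ∈ S.Ω) {Λ : ℝ} (hΛ : 0 ≤ Λ) :
    (0 : Euc d) ∈ {p : Euc d | S.H x p ≤ Λ} := by
  simpa [S.H_zero x hx] using hΛ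

lemma lfun_bddAbove (S : SupSetup d) {x : Euc d} (hx : x ∈ S.Ω) {Λ M : ℝ}
    (hM : ∀ x ∈ S.Ω, ∀ p : Euc d, S.H x p ≤ Λ → ‖p‖ ≤ M) (q : Euc d) :
    BddAbove ((fun p : Euc d => (inner ℝ p q : ℝ)) '' {p : Euc d | S.H x p ≤ Λ}) := by
  refine ⟨M * ‖q‖, ?_⟩
  rintro y ⟨p, hp, rfl⟩
  calc (inner ℝ p q : ℝ) ≤ ‖p‖ * ‖q‖ := real_inner_le_norm p q
  _ ≤ M * ‖q‖ := mul_le_mul_of_nonneg_right (hM x hx p hp) (norm_nonneg q)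

lemma lfun_le (S : SupSetup d) {x : Euc d} (hx : x ∈ S.Ω) {Λ M : ℝ} (hΛ : 0 ≤ Λ)
    (hM : ∀ x ∈ S.Ω, ∀ p : Euc d, S.H x p ≤ Λ → ‖p‖ ≤ M) (q : Euc d) :
    Lfun S Λ x q ≤ M * ‖q‖ := by
  refine csSup_le ⟨0, ⟨0, sublevel_nonempty S hx hΛ, by simp⟩⟩ ?_
  rintro y ⟨p, hp, rfl⟩
  calc (inner ℝ p q : ℝ) ≤ ‖p‖ * ‖q‖ := real_inner_le_norm p q
  _ ≤ M * ‖q‖ := mul_le_mul_of_nonneg_right (hM x hx p hp) (norm_nonneg q)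

lemma lfun_nonneg (S : SupSetup d) {x : Euc d} (hx : x ∈ S.Ω) {Λ M : ℝ} (hΛ : 0 ≤ Λ)
    (hM : ∀ x ∈ S.Ω, ∀ p : Euc d, S.H x p ≤ Λ → ‖p‖ ≤ M) (q : Euc d) :
    0 ≤ Lfun S Λ x q := by
  have := le_csSup (lfun_bddAbove S hx hM q) ⟨0, sublevel_nonempty S hx hΛ, rfl⟩
  simpa [Lfun] using this

lemma lfun_measSet (S : SupSetup d) {Λ M : ℝ} (hΛ : 0 ≤ Λ)
    (hM : ∀ x ∈ S.Ω, ∀ p : Euc d, S.H x p ≤ Λ → ‖p‖ ≤ M) (c : ℝ) :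
    MeasurableSet {z : Euc d × Euc d | z.1 ∈ S.Ω ∧ c ≤ Lfun S Λ z.1 z.2} := by
  set W := {z : Euc d × Euc d | z.1 ∈ S.Ω ∧ c ≤ Lfun S Λ z.1 z.2} with hW
  have hkey : W = (S.Ω ×ˢ (univ : Set (Euc d))) ∩ closure W := by
    ext z
    constructor
    · intro hz
      exact ⟨⟨hz.1, mem_univ _⟩, subset_closure hz⟩
    · rintro ⟨⟨hz1, -⟩, hcl⟩
      obtain ⟨zs, hzsW, hzs⟩ := mem_closure_iff_seq_limit.1 hcl
      -- maximizers
      have hmax : ∀ n, ∃ p : Euc d, S.H (zs n).1 p ≤ Λ ∧ c ≤ (inner ℝ p (zs n).2 : ℝ) := by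
        intro n
        have hxn : (zs n).1 ∈ S.Ω := (hzsW n).1
        have hcont : Continuous (fun p : Euc d => (inner ℝ p ((zs n).2) : ℝ)) :=
          continuous_id.inner continuous_const
        obtain ⟨p, hp, hmax⟩ := (sublevel_isCompact S hxn hM).exists_isMaxOn
          ⟨0, sublevel_nonempty S hxn hΛ⟩ hcont.continuousOn
        refine ⟨p, hp, ?_⟩
        have hle : Lfun S Λ (zs n).1 (zs n).2 ≤ (inner ℝ p (zs n).2 : ℝ) := by
          refine csSup_le ⟨0, ⟨0, sublevel_nonempty S hxn hΛ, by simp⟩⟩ ?_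
          rintro y ⟨p', hp', rfl⟩
          exact hmax hp'
        exact le_trans (hzsW n).2 hle
      choose ps hps hcps using hmax
      have hball : ∀ n, ps n ∈ Metric.closedBall (0 : Euc d) M := by
        intro n
        simpa [Metric.mem_closedBall, dist_eq_norm] using hM _ (hzsW n).1 _ (hps n)
      obtain ⟨p, -, φ, hφ, hpφ⟩ := (isCompact_closedBall (0 : Euc d) M).tendsto_subseq hball
      have hzφ : Tendsto (fun n => zs (φ n)) atTop (𝓝 z) := hzs.comp hφ.tendsto_atTop
      -- H z.1 p ≤ Λ
      have htend : Tendsto (fun n => ((zs (φ n)).1, ps (φ n))) atTop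
          (𝓝[S.Ω ×ˢ (univ : Set (Euc d))] (z.1, p)) := by
        rw [tendsto_nhdsWithin_iff]
        constructor
        · exact ((continuous_fst.tendsto z).comp hzφ).prodMk_nhds hpφ
        · exact Eventually.of_forall fun n => ⟨(hzsW (φ n)).1, mem_univ _⟩
      have hHt : Tendsto (fun n => S.H (zs (φ n)).1 (ps (φ n))) atTop (𝓝 (S.H z.1 p)) :=
        (S.H_cont (z.1, p) ⟨hz1, mem_univ _⟩).tendsto.comp htend
      have hHp : S.H z.1 p ≤ Λ :=
        le_of_tendsto hHt (Eventually.of_forall fun n => hps (φ n))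
      -- c ≤ inner ℝ p z.2
      have hinner : Tendsto (fun n => (inner ℝ (ps (φ n)) ((zs (φ n)).2) : ℝ)) atTop
          (𝓝 (inner ℝ p z.2 : ℝ)) :=
        hpφ.inner ((continuous_snd.tendsto z).comp hzφ)
      have hcp : c ≤ (inner ℝ p z.2 : ℝ) :=
        le_of_tendsto_of_tendsto' tendsto_const_nhds hinner fun n => hcps (φ n)
      refine ⟨hz1, le_trans hcp ?_⟩
      exact le_csSup (lfun_bddAbove S hz1 hM z.2) ⟨p, hHp, rfl⟩
  rw [hkey]
  exact ((S.isOpen_Ω.prod isOpen_univ).measurableSet).inter isClosed_closure.measurableSet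

end auxlem

section auxlem2
variable {d : ℕ}

lemma lfun_ge (S : SupSetup d) {Λ : ℝ} {x : Euc d} (hx : x ∈ S.Ω) {M : ℝ}
    (hM : ∀ x ∈ S.Ω, ∀ p : Euc d, S.H x p ≤ Λ → ‖p‖ ≤ M) {w : Euc d} {δ : ℝ} (hδ : 0 < δ)
    (hw : ∀ e : Euc d, ‖e‖ < δ → S.H x (w + e) ≤ Λ) (q : Euc d) :
    (inner ℝ w q : ℝ) + δ * ‖q‖ ≤ Lfun S Λ x q := by
  have hbdd := lfun_bddAbove S hx hM q
  have hwmem : S.H x w ≤ Λ := by simpa using hw 0 (by simpa using hδ)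
  by_cases hq : q = 0
  · subst hq
    have h1 : (inner ℝ w (0 : Euc d) : ℝ) ≤ Lfun S Λ x 0 := le_csSup hbdd ⟨w, hwmem, rfl⟩
    simpa using h1
  · have hqn : (0:ℝ) < ‖q‖ := norm_pos_iff.2 hq
    set s : ℕ → ℝ := fun n => δ - δ / (n + 1) with hs
    have hs0 : ∀ n : ℕ, 0 ≤ s n := by
      intro n
      have h1 : δ / ((n:ℝ) + 1) ≤ δ := by
        rw [div_le_iff₀ (by positivity)]
        nlinarith [Nat.cast_nonneg (α := ℝ) n]
      simp only [hs]; linarith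
    have hslt : ∀ n : ℕ, s n < δ := by
      intro n
      have : (0:ℝ) < δ / (n+1) := by positivity
      simp only [hs]; linarith
    have hterm : ∀ n : ℕ, (inner ℝ w q : ℝ) + s n * ‖q‖ ≤ Lfun S Λ x q := by
      intro n
      set e : Euc d := s n • (‖q‖⁻¹ • q) with he
      have hne : ‖e‖ = s n := by
        rw [he, norm_smul, norm_smul, norm_inv, norm_norm, Real.norm_eq_abs,
          abs_of_nonneg (hs0 n)]
        field_simp
      have hmem : S.H x (w + e) ≤ Λ := hw e (by rw [hne]; exact hslt n)
      have hval : (inner ℝ (w + e) q : ℝ) = (inner ℝ w q : ℝ) + s n * ‖q‖ := by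
        rw [inner_add_left, he, real_inner_smul_left, real_inner_smul_left,
          real_inner_self_eq_norm_mul_norm]
        field_simp
      have h2 : (inner ℝ (w + e) q : ℝ) ≤ Lfun S Λ x q := le_csSup hbdd ⟨w + e, hmem, rfl⟩
      rw [hval] at h2
      exact h2
    have hlim : Tendsto (fun n : ℕ => (inner ℝ w q : ℝ) + s n * ‖q‖) atTop
        (𝓝 ((inner ℝ w q : ℝ) + δ * ‖q‖)) := by
      have h2 : Tendsto (fun n : ℕ => δ / ((n:ℝ)+1)) atTop (𝓝 0) := by
        simpa [div_eq_mul_inv, mul_comm] using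
          tendsto_one_div_add_atTop_nhds_zero_nat.const_mul δ
      have h3 : Tendsto s atTop (𝓝 δ) := by
        simpa using (tendsto_const_nhds (x := δ)).sub h2
      exact tendsto_const_nhds.add (h3.mul_const _)
    exact le_of_tendsto hlim (Eventually.of_forall hterm)

end auxlem2

section auxlem3
variable {d : ℕ}



lemma norm_deriv_le_lip {γ : ℝ → Euc d} {K : NNReal} (hγ : LipschitzWith K γ) (t : ℝ) :
    ‖deriv γ t‖ ≤ K := by
  by_cases hdiff : DifferentiableAt ℝ γ t
  · have h1 : deriv γ t = (fderiv ℝ γ t) 1 := by rw [fderiv_apply_one_eq_deriv]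
    rw [h1]
    calc ‖(fderiv ℝ γ t) 1‖ ≤ ‖fderiv ℝ γ t‖ * ‖(1:ℝ)‖ := (fderiv ℝ γ t).le_opNorm 1
    _ ≤ K := by simpa using norm_fderiv_le_of_lipschitz ℝ hγ
  · rw [deriv_zero_of_not_differentiableAt hdiff]; simp

lemma curve_ftc {γ : ℝ → Euc d} {K : NNReal} (hγ : LipschitzWith K γ)
    (v : Euc d) {a b : ℝ} (hab : a ≤ b) :
    (inner ℝ v (γ b) : ℝ) - inner ℝ v (γ a) = ∫ t in Ioo a b, (inner ℝ v (deriv γ t) : ℝ) := by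
  set f : ℝ → ℝ := fun t => inner ℝ v (γ t) with hfdef
  have hlip : LipschitzWith (‖innerSL ℝ v‖₊ * K) f := (innerSL ℝ v).lipschitz.comp hγ
  rw [show (inner ℝ v (γ b) : ℝ) - inner ℝ v (γ a) = f b - f a from rfl, lip_ftc hlip hab]
  refine integral_congr_ae ?_
  refine ae_restrict_of_ae ?_
  filter_upwards [hγ.ae_differentiableAt] with t ht
  have hD : HasDerivAt f ((innerSL ℝ v) (deriv γ t)) t :=
    ((innerSL ℝ v).hasFDerivAt).comp_hasDerivAt t ht.hasDerivAt
  exact hD.deriv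

lemma energy_lower (S : SupSetup d) {Λ M : ℝ} (hΛ : 0 ≤ Λ) (hM0 : 0 ≤ M)
    (hM : ∀ x ∈ S.Ω, ∀ p : Euc d, S.H x p ≤ Λ → ‖p‖ ≤ M)
    {γ : ℝ → Euc d} {K : NNReal} (hγ : LipschitzWith K γ)
    (hγΩ : ∀ t ∈ Icc (0:ℝ) 1, γ t ∈ S.Ω)
    {a b : ℝ} (h0a : 0 ≤ a) (hab : a ≤ b) (hb1 : b ≤ 1)
    (v : Euc d)
    (hv : ∀ t ∈ Ioo a b, (inner ℝ v (deriv γ t) : ℝ) ≤ Lfun S Λ (γ t) (deriv γ t)) :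
    (inner ℝ v (γ b - γ a) : ℝ) ≤ energy S Λ γ := by
  classical
  set F : ℝ → ℝ := fun t => Lfun S Λ (γ t) (deriv γ t) with hF
  have hmemI : ∀ t ∈ Ioo (0:ℝ) 1, γ t ∈ S.Ω := fun t ht => hγΩ t (Ioo_subset_Icc_self ht)
  -- measurability
  have hg : Measurable (fun t : ℝ => (γ t, deriv γ t)) :=
    (hγ.continuous.measurable).prodMk (measurable_deriv γ)
  have hUm : Measurable (fun z : Euc d × Euc d =>
      if z.1 ∈ S.Ω then Lfun S Λ z.1 z.2 else 0) := by
    apply measurable_of_Ici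
    intro c
    by_cases hc : c ≤ (0:ℝ)
    · have heq : (fun z : Euc d × Euc d => if z.1 ∈ S.Ω then Lfun S Λ z.1 z.2 else 0) ⁻¹'
          Ici c = {z : Euc d × Euc d | z.1 ∈ S.Ω ∧ c ≤ Lfun S Λ z.1 z.2} ∪
          {z : Euc d × Euc d | z.1 ∉ S.Ω} := by
        ext z
        simp only [mem_preimage, mem_Ici, mem_union, mem_setOf_eq]
        by_cases h : z.1 ∈ S.Ω <;> simp [h, hc]
      rw [heq]
      exact (lfun_measSet S hΛ hM c).union
        (measurable_fst S.isOpen_Ω.measurableSet.compl)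
    · have heq : (fun z : Euc d × Euc d => if z.1 ∈ S.Ω then Lfun S Λ z.1 z.2 else 0) ⁻¹'
          Ici c = {z : Euc d × Euc d | z.1 ∈ S.Ω ∧ c ≤ Lfun S Λ z.1 z.2} := by
        ext z
        simp only [mem_preimage, mem_Ici, mem_setOf_eq]
        by_cases h : z.1 ∈ S.Ω <;> simp [h, hc]
      rw [heq]
      exact lfun_measSet S hΛ hM c
  have hFm : AEStronglyMeasurable F (volume.restrict (Ioo (0:ℝ) 1)) := by
    refine ((hUm.comp hg).aestronglyMeasurable).congr ?_
    filter_upwards [ae_restrict_mem measurableSet_Ioo] with t ht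
    simp only [Function.comp, hF, if_pos (hmemI t ht)]
  have hFnn : ∀ t ∈ Ioo (0:ℝ) 1, 0 ≤ F t := fun t ht => lfun_nonneg S (hmemI t ht) hΛ hM _
  have hFub : ∀ t ∈ Ioo (0:ℝ) 1, F t ≤ M * K := fun t ht =>
    le_trans (lfun_le S (hmemI t ht) hΛ hM _)
      (mul_le_mul_of_nonneg_left (norm_deriv_le_lip hγ t) hM0)
  have hFint : IntegrableOn F (Ioo (0:ℝ) 1) := by
    refine Integrable.mono' (g := fun _ => M * (K:ℝ))
      (integrableOn_const measure_Ioo_lt_top.ne enorm_ne_top) hFm ?_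
    filter_upwards [ae_restrict_mem measurableSet_Ioo] with t ht
    rw [Real.norm_eq_abs, abs_of_nonneg (hFnn t ht)]
    exact hFub t ht
  have hsub : Ioo a b ⊆ Ioo (0:ℝ) 1 := Ioo_subset_Ioo h0a hb1
  have hstep1 : ∫ t in Ioo a b, F t ≤ ∫ t in Ioo (0:ℝ) 1, F t := by
    refine setIntegral_mono_set hFint ?_ (HasSubset.Subset.eventuallyLE hsub)
    filter_upwards [ae_restrict_mem measurableSet_Ioo] with t ht using hFnn t ht
  have hIint : IntegrableOn (fun t => (inner ℝ v (deriv γ t) : ℝ)) (Ioo a b) := by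
    refine Integrable.mono' (g := fun _ => ‖v‖ * (K:ℝ))
      (integrableOn_const measure_Ioo_lt_top.ne enorm_ne_top)
      ((((innerSL ℝ v).continuous.measurable).comp
        (measurable_deriv γ)).aestronglyMeasurable) ?_
    refine Eventually.of_forall fun t => ?_
    calc ‖(inner ℝ v (deriv γ t) : ℝ)‖ ≤ ‖v‖ * ‖deriv γ t‖ := norm_inner_le_norm v _
    _ ≤ ‖v‖ * K := mul_le_mul_of_nonneg_left (norm_deriv_le_lip hγ t) (norm_nonneg v)
  have hstep0 : ∫ t in Ioo a b, (inner ℝ v (deriv γ t) : ℝ) ≤ ∫ t in Ioo a b, F t := by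
    refine setIntegral_mono_on hIint (hFint.mono_set hsub) measurableSet_Ioo ?_
    exact hv
  have hftc := curve_ftc hγ v hab
  have : (inner ℝ v (γ b - γ a) : ℝ) = (inner ℝ v (γ b) : ℝ) - inner ℝ v (γ a) := by
    rw [inner_sub_right]
  rw [this, hftc]
  exact le_trans hstep0 hstep1

end auxlem3


set_option maxHeartbeats 2000000 in
/-- if `u` is differentiable at `x₀` then
`H(x₀, Du(x₀)) ≥ H(x₀, Du)(x₀)`. -/
theorem stmt11 {d : ℕ} (S : SupSetup d) (u : Euc d → ℝ) (hu : W1infC S u)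
    (x₀ : Euc d) (hx₀ : x₀ ∈ S.Ω) (Du : Euc d) (hdiff : HasGradientAt u Du x₀) :
    Hof S u x₀ ≤ S.H x₀ Du := by
  classical
  have hH0 : 0 ≤ S.H x₀ Du := S.H_nonneg x₀ hx₀ Du
  set R := Metric.infDist x₀ (frontier S.Ω) with hRdef
  have hmu_nonneg : ∀ r : ℝ, 0 ≤ muFun S u x₀ r := by
    intro r
    apply Real.sInf_nonneg
    rintro lam ⟨h0, -⟩; exact h0
  have hbdd : BddBelow (muFun S u x₀ '' Ioo 0 R) := by
    refine ⟨0, ?_⟩; rintro y ⟨r, -, rfl⟩; exact hmu_nonneg r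
  by_cases hRpos : 0 < R
  swap
  · have hempty : Ioo (0:ℝ) R = ∅ := Ioo_eq_empty hRpos
    rw [Hof, ← hRdef, hempty, image_empty, Real.sInf_empty]
    exact hH0
  have key : ∀ ε > (0:ℝ), Hof S u x₀ ≤ S.H x₀ Du + ε := by
    intro ε hε
    set Λ : ℝ := S.H x₀ Du + ε with hΛdef
    have hΛpos : 0 < Λ := by linarith
    set μ' : ℝ := S.H x₀ Du + ε / 2 with hμ'def
    have hμ'nn : 0 ≤ μ' := by rw [hμ'def]; linarith
    have hμ'lt : μ' < Λ := by rw [hμ'def, hΛdef]; linarith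
    obtain ⟨α, hα, hDα⟩ := S.H_D Λ μ' hμ'nn hμ'lt
    obtain ⟨β, hβ, hDβ⟩ := S.H_D Λ 0 le_rfl hΛpos
    obtain ⟨M, hM0, hM⟩ := S.H_coercive Λ
    -- continuity at x₀: a ball where H x Du < μ'
    have hcontx : ContinuousAt (fun x : Euc d => S.H x Du) x₀ := by
      have hopen : IsOpen (S.Ω ×ˢ (univ : Set (Euc d))) := S.isOpen_Ω.prod isOpen_univ
      have h1 : ContinuousAt (fun z : Euc d × Euc d => S.H z.1 z.2) (x₀, Du) :=
        S.H_cont.continuousAt (hopen.mem_nhds ⟨hx₀, mem_univ _⟩)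
      have h2 : ContinuousAt (fun x : Euc d => (x, Du)) x₀ :=
        continuousAt_id.prodMk continuousAt_const
      exact ContinuousAt.comp (x := x₀) h1 h2
    have hx₀lt : S.H x₀ Du < μ' := by simp only [hμ'def]; linarith
    have hnb : {x : Euc d | S.H x Du < μ'} ∈ 𝓝 x₀ :=
      hcontx.preimage_mem_nhds (isOpen_Iio.mem_nhds hx₀lt)
    obtain ⟨ρ₁, hρ₁, hball₁⟩ := Metric.mem_nhds_iff.1 hnb
    -- Lipschitz data for u near x₀
    obtain ⟨Ku, hKu⟩ := hu.1
    obtain ⟨ε₀, hε₀, hballΩ, hlipu⟩ := hKu x₀ hx₀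
    set ρ : ℝ := min ρ₁ ε₀ / 2 with hρdef
    have hρpos : 0 < ρ := by positivity
    have hρ_lt_ρ₁ : ρ < ρ₁ := by
      have := min_le_left ρ₁ ε₀; simp only [hρdef]; linarith
    have hρ_lt_ε₀ : ρ < ε₀ := by
      have := min_le_right ρ₁ ε₀; simp only [hρdef]; linarith
    -- differentiability estimate radius
    have hlo := Asymptotics.isLittleO_iff.1 hdiff.hasFDerivAt.isLittleO hα
    rw [Metric.eventually_nhds_iff] at hlo
    obtain ⟨r₁, hr₁, hr₁est⟩ := hlo
    -- the final radius
    set r : ℝ := min (min ρ (β * ρ / ((Ku : ℝ) + 1))) (min r₁ (R / 2)) with hrdef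
    have hrpos : 0 < r := by
      have h1 : 0 < β * ρ / ((Ku : ℝ) + 1) := by positivity
      simp only [hrdef, lt_min_iff]
      exact ⟨⟨hρpos, h1⟩, hr₁, by linarith⟩
    have hr_le_ρ : r ≤ ρ := le_trans (min_le_left _ _) (min_le_left _ _)
    have hr_le_K : r ≤ β * ρ / ((Ku : ℝ) + 1) := le_trans (min_le_left _ _) (min_le_right _ _)
    have hr_le_r₁ : r ≤ r₁ := le_trans (min_le_right _ _) (min_le_left _ _)
    have hr_lt_R : r < R := lt_of_le_of_lt (le_trans (min_le_right _ _) (min_le_right _ _))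
      (by linarith)
    have hr_mem : r ∈ Ioo (0:ℝ) R := ⟨hrpos, hr_lt_R⟩
    -- Λ belongs to the defining set of muFun r
    have hΛmem : Λ ∈ {lam : ℝ | 0 ≤ lam ∧ ∀ x ∈ Metric.ball x₀ r,
        ENNReal.ofReal (u x - u x₀) ≤ pdist S lam x₀ x} := by
      refine ⟨hΛpos.le, fun x hx => ?_⟩
      rw [pdist]
      refine le_iInf fun γ => le_iInf fun hγ => ?_
      obtain ⟨⟨Kγ, hKγ⟩, hγΩ, hγ0, hγ1⟩ := hγ
      refine ENNReal.ofReal_le_ofReal ?_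
      by_cases hcase : ∀ t ∈ Icc (0:ℝ) 1, γ t ∈ Metric.ball x₀ ρ
      · -- path stays in the small ball
        by_cases hxx : x = x₀
        · subst hxx
          have : (0:ℝ) ≤ energy S Λ γ := by
            refine setIntegral_nonneg measurableSet_Ioo fun t ht => ?_
            exact lfun_nonneg S (hγΩ t (Ioo_subset_Icc_self ht)) hΛpos.le hM _
          simpa using this
        · have hxn : (0:ℝ) < ‖x - x₀‖ := by
            rw [norm_pos_iff]; exact sub_ne_zero.2 hxx
          set e : Euc d := ‖x - x₀‖⁻¹ • (x - x₀) with hedef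
          have hnorme : ‖e‖ = 1 := by
            rw [hedef, norm_smul, norm_inv, norm_norm]; field_simp
          set v : Euc d := Du + α • e with hvdef
          have hv : ∀ t ∈ Ioo (0:ℝ) 1,
              (inner ℝ v (deriv γ t) : ℝ) ≤ Lfun S Λ (γ t) (deriv γ t) := by
            intro t ht
            have htIcc := Ioo_subset_Icc_self ht
            have hmem : γ t ∈ S.Ω := hγΩ t htIcc
            have hHD : S.H (γ t) Du ≤ μ' :=
              (hball₁ (Metric.ball_subset_ball hρ_lt_ρ₁.le (hcase t htIcc))).le
            have hint : ∀ e' : Euc d, ‖e'‖ < α → S.H (γ t) (Du + e') ≤ Λ := by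
              intro e' he'
              apply hDα (γ t) hmem
              exact Set.add_mem_add hHD (by simpa [Metric.mem_ball, dist_eq_norm] using he')
            have h1 := lfun_ge S hmem hM hα hint (deriv γ t)
            have h2 : (inner ℝ v (deriv γ t) : ℝ)
                ≤ (inner ℝ Du (deriv γ t) : ℝ) + α * ‖deriv γ t‖ := by
              rw [hvdef, inner_add_left, real_inner_smul_left]
              have : (inner ℝ e (deriv γ t) : ℝ) ≤ ‖deriv γ t‖ := by
                calc (inner ℝ e (deriv γ t) : ℝ) ≤ ‖e‖ * ‖deriv γ t‖ := real_inner_le_norm _ _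
                _ = ‖deriv γ t‖ := by rw [hnorme, one_mul]
              nlinarith
            exact le_trans h2 h1
          have hmain := energy_lower S hΛpos.le hM0 hM hKγ hγΩ le_rfl zero_le_one le_rfl v hv
          rw [hγ0, hγ1] at hmain
          have hvx : (inner ℝ v (x - x₀) : ℝ) = (inner ℝ Du (x - x₀) : ℝ) + α * ‖x - x₀‖ := by
            rw [hvdef, inner_add_left, hedef, real_inner_smul_left, real_inner_smul_left,
              real_inner_self_eq_norm_mul_norm]
            field_simp
          have hest : |u x - u x₀ - (inner ℝ Du (x - x₀) : ℝ)| ≤ α * ‖x - x₀‖ := by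
            have hd : dist x x₀ < r₁ := lt_of_lt_of_le (Metric.mem_ball.1 hx) hr_le_r₁
            have := hr₁est hd
            simpa [InnerProductSpace.toDual_apply_apply, Real.norm_eq_abs] using this
          have hest' : u x - u x₀ ≤ (inner ℝ Du (x - x₀) : ℝ) + α * ‖x - x₀‖ := by
            have := abs_le.1 hest; linarith [this.2]
          linarith [hmain, hvx ▸ hmain]
      · -- path escapes the ball
        push_neg at hcase
        obtain ⟨t₁, ht₁I, ht₁⟩ := hcase
        have hd : ρ ≤ dist (γ t₁) x₀ := by
          rw [Metric.mem_ball, not_lt] at ht₁; exact ht₁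
        have hwn : ρ ≤ ‖γ t₁ - x₀‖ := by rwa [← dist_eq_norm]
        have hwpos : (0:ℝ) < ‖γ t₁ - x₀‖ := lt_of_lt_of_le hρpos hwn
        set e : Euc d := ‖γ t₁ - x₀‖⁻¹ • (γ t₁ - x₀) with hedef
        have hnorme : ‖e‖ = 1 := by
          rw [hedef, norm_smul, norm_inv, norm_norm]; field_simp
        set v : Euc d := β • e with hvdef
        have hv : ∀ t ∈ Ioo (0:ℝ) t₁,
            (inner ℝ v (deriv γ t) : ℝ) ≤ Lfun S Λ (γ t) (deriv γ t) := by
          intro t ht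
          have htIcc : t ∈ Icc (0:ℝ) 1 := ⟨ht.1.le, le_trans ht.2.le ht₁I.2⟩
          have hmem : γ t ∈ S.Ω := hγΩ t htIcc
          have hint : ∀ e' : Euc d, ‖e'‖ < β → S.H (γ t) ((0:Euc d) + e') ≤ Λ := by
            intro e' he'
            apply hDβ (γ t) hmem
            refine Set.add_mem_add ?_ (by simpa [Metric.mem_ball, dist_eq_norm] using he')
            simp [S.H_zero (γ t) hmem]
          have h1 := lfun_ge S hmem hM hβ hint (deriv γ t)
          have h2 : (inner ℝ v (deriv γ t) : ℝ)
              ≤ (inner ℝ (0:Euc d) (deriv γ t) : ℝ) + β * ‖deriv γ t‖ := by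
            rw [hvdef, real_inner_smul_left, inner_zero_left, zero_add]
            have : (inner ℝ e (deriv γ t) : ℝ) ≤ ‖deriv γ t‖ := by
              calc (inner ℝ e (deriv γ t) : ℝ) ≤ ‖e‖ * ‖deriv γ t‖ := real_inner_le_norm _ _
              _ = ‖deriv γ t‖ := by rw [hnorme, one_mul]
            nlinarith
          exact le_trans h2 h1
        have hmain := energy_lower S hΛpos.le hM0 hM hKγ hγΩ le_rfl ht₁I.1 ht₁I.2 v hv
        rw [hγ0] at hmain
        have hveq : (inner ℝ v (γ t₁ - x₀) : ℝ) = β * ‖γ t₁ - x₀‖ := by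
          rw [hvdef, hedef, real_inner_smul_left, real_inner_smul_left,
            real_inner_self_eq_norm_mul_norm]
          field_simp
        have hβρ : β * ρ ≤ energy S Λ γ := by
          have : β * ρ ≤ β * ‖γ t₁ - x₀‖ := mul_le_mul_of_nonneg_left hwn hβ.le
          linarith [hveq ▸ hmain]
        -- u x − u x₀ small
        have hux : u x - u x₀ ≤ β * ρ := by
          have hxball : x ∈ Metric.ball x₀ ε₀ :=
            Metric.ball_subset_ball (by linarith) hx
          have hx₀ball : x₀ ∈ Metric.ball x₀ ε₀ := Metric.mem_ball_self hε₀
          have hdist := hlipu.dist_le_mul x hxball x₀ hx₀ball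
          have h1 : u x - u x₀ ≤ (Ku : ℝ) * dist x x₀ := by
            rw [Real.dist_eq] at hdist
            calc u x - u x₀ ≤ |u x - u x₀| := le_abs_self _
            _ ≤ (Ku : ℝ) * dist x x₀ := hdist
          have h2 : (Ku : ℝ) * dist x x₀ ≤ (Ku : ℝ) * r :=
            mul_le_mul_of_nonneg_left (Metric.mem_ball.1 hx).le Ku.coe_nonneg
          have h3 : (Ku : ℝ) * r ≤ β * ρ := by
            have h4 : (Ku : ℝ) * r ≤ (Ku : ℝ) * (β * ρ / ((Ku : ℝ) + 1)) :=
              mul_le_mul_of_nonneg_left hr_le_K Ku.coe_nonneg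
            have h5 : (Ku : ℝ) * (β * ρ / ((Ku : ℝ) + 1)) ≤ β * ρ := by
              rw [mul_div_assoc']
              rw [div_le_iff₀ (by positivity : (0:ℝ) < (Ku : ℝ) + 1)]
              nlinarith [Ku.coe_nonneg, mul_nonneg hβ.le hρpos.le]
            linarith
          linarith
        linarith
    -- conclude
    have h1 : muFun S u x₀ r ≤ Λ := by
      rw [muFun]
      exact csInf_le ⟨0, fun lam hlam => hlam.1⟩ hΛmem
    have h2 : Hof S u x₀ ≤ muFun S u x₀ r := by
      rw [Hof]
      exact csInf_le hbdd ⟨r, hr_mem, rfl⟩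
    simp only [hΛdef] at h1
    linarith
  by_contra hlt
  push_neg at hlt
  have := key ((Hof S u x₀ - S.H x₀ Du) / 2) (by linarith)
  linarith
end

section
/- Let x, y ∈ Ω, let γ : [0,1] → Ω be a Lipschitz curve with γ(0) = x and γ(1) = y, and let E ⊂ ℝ^d with Lebesgue measure zero. Then for every ε > 0 there exists a Lipschitz curve γ_ε : [0,1] → Ω with γ_ε(0) = x, γ_ε(1) = y, which is transversal to E (i.e. the 1-dimensional Hausdorff measure of γ_ε((0,1)) ∩ E is zero) and satisfies ‖γ_ε − γ‖_{W^{1,∞}((0,1))} < ε (i.e. sup_t |γ_ε(t) − γ(t)| + esssup_t |γ_ε'(t) − γ'(t)| < ε). -/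
open Set Filter Topology MeasureTheory
open scoped Pointwise ENNReal

/-- any Lipschitz curve in `Ω` can be approximated in `W^{1,∞}` by
Lipschitz curves with the same endpoints which are transversal to a given Lebesgue
null set `E`. -/
theorem stmt16 {d : ℕ} (Ω : Set (Euc d)) (hΩo : IsOpen Ω)
    (hΩb : Bornology.IsBounded Ω) (hΩc : IsConnected Ω)
    (x y : Euc d) (hx : x ∈ Ω) (hy : y ∈ Ω)
    (γ : ℝ → Euc d) (hγ : ∃ K : NNReal, LipschitzWith K γ)
    (hγΩ : ∀ t ∈ Icc (0:ℝ) 1, γ t ∈ Ω) (h0 : γ 0 = x) (h1 : γ 1 = y)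
    (E : Set (Euc d)) (hE : volume E = 0) :
    ∀ ε > (0:ℝ), ∃ γε : ℝ → Euc d,
      (∃ K : NNReal, LipschitzWith K γε) ∧
      (∀ t ∈ Icc (0:ℝ) 1, γε t ∈ Ω) ∧ γε 0 = x ∧ γε 1 = y ∧
      (MeasureTheory.Measure.hausdorffMeasure (1:ℝ) : Measure (Euc d))
        (γε '' Ioo (0:ℝ) 1 ∩ E) = 0 ∧
      ∃ C₁ C₂ : ℝ, (∀ t ∈ Icc (0:ℝ) 1, ‖γε t - γ t‖ ≤ C₁) ∧
        (∀ᵐ t ∂(volume.restrict (Ioo (0:ℝ) 1)), ‖deriv γε t - deriv γ t‖ ≤ C₂) ∧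
        C₁ + C₂ < ε := by
  intro ε hε
  obtain ⟨K, hK⟩ := hγ
  obtain ⟨G, hEG, hGm, hG0⟩ := exists_measurable_superset_of_null hE
  -- the bump function φ
  set φ : ℝ → ℝ := fun t => max 0 (min t (1 - t)) with hφdef
  have hφlip : LipschitzWith 1 φ := by
    have h1 : LipschitzWith (1 ⊔ ((0:NNReal) + 1)) (fun t : ℝ => min t (1 - t)) :=
      LipschitzWith.id.min ((LipschitzWith.const' (K := 0) (1:ℝ)).sub LipschitzWith.id)
    have h2 := (LipschitzWith.const' (K := 0) (0:ℝ)).max h1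
    norm_num at h2
    exact h2
  have hφ0 : φ 0 = 0 := by simp [hφdef]
  have hφ1 : φ 1 = 0 := by simp [hφdef]
  have hφpos : ∀ t ∈ Ioo (0:ℝ) 1, 0 < φ t := by
    intro t ht
    have h : 0 < min t (1 - t) := lt_min ht.1 (by linarith [ht.2])
    exact lt_of_lt_of_le h (le_max_right _ _)
  have hφnonneg : ∀ t : ℝ, 0 ≤ φ t := fun t => le_max_left _ _
  have hφle : ∀ t : ℝ, φ t ≤ 1/2 := by
    intro t
    rcases le_total t (1/2) with h | h
    · exact max_le (by norm_num) (le_trans (min_le_left _ _) h)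
    · exact max_le (by norm_num) (le_trans (min_le_right _ _) (by linarith))
  -- a safety margin around the curve
  have hKc : IsCompact (γ '' Icc 0 1) := isCompact_Icc.image hK.continuous
  obtain ⟨δ, hδ, hδsub⟩ := hKc.exists_thickening_subset_open hΩo
    (by rintro _ ⟨t, ht, rfl⟩; exact hγΩ t ht)
  set r := min δ (ε/2) with hrdef
  have hr : 0 < r := lt_min hδ (by linarith)
  -- the bad set of parameters
  set A : Set (Euc d × ℝ) := {p | p.2 ∈ Ioo (0:ℝ) 1 ∧ γ p.2 + φ p.2 • p.1 ∈ G} with hAdef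
  have hAeq : A = (Prod.snd ⁻¹' Ioo (0:ℝ) 1) ∩
      ((fun p : Euc d × ℝ => γ p.2 + φ p.2 • p.1) ⁻¹' G) := rfl
  have hFc : Continuous (fun p : Euc d × ℝ => γ p.2 + φ p.2 • p.1) :=
    (hK.continuous.comp continuous_snd).add
      ((hφlip.continuous.comp continuous_snd).smul continuous_fst)
  have hAm : MeasurableSet A := by
    rw [hAeq]
    exact (measurable_snd measurableSet_Ioo).inter (hFc.measurable hGm)
  have hB0 : (volume.prod volume) (Prod.swap ⁻¹' A : Set (ℝ × Euc d)) = 0 := by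
    rw [Measure.measure_prod_null (hAm.preimage measurable_swap)]
    refine ae_of_all _ fun t => ?_
    by_cases ht : t ∈ Ioo (0:ℝ) 1
    · have hslice : (Prod.mk t ⁻¹' (Prod.swap ⁻¹' A) : Set (Euc d)) =
          (fun w : Euc d => (φ t) • w) ⁻¹' ((fun w => γ t + w) ⁻¹' G) := by
        obtain ⟨ht1, ht2⟩ := ht
        ext w; simp [hAdef, ht1, ht2]
      show volume (Prod.mk t ⁻¹' (Prod.swap ⁻¹' A)) = 0
      rw [hslice, Measure.addHaar_preimage_smul volume (ne_of_gt (hφpos t ht)),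
        measure_preimage_add, hG0, mul_zero]
    · have hslice : (Prod.mk t ⁻¹' (Prod.swap ⁻¹' A) : Set (Euc d)) = ∅ := by
        ext w
        simp only [mem_preimage, Prod.swap_prod_mk, hAdef, mem_setOf_eq,
          mem_empty_iff_false, iff_false, not_and]
        intro hmem
        exact absurd hmem ht
      show volume (Prod.mk t ⁻¹' (Prod.swap ⁻¹' A)) = 0
      rw [hslice]; simp
  have hA0 : (volume.prod volume) A = 0 := by
    have hswap : (volume.prod volume : Measure (Euc d × ℝ)) A =
        (volume.prod volume : Measure (ℝ × Euc d)) (Prod.swap ⁻¹' A) := by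
      rw [← Measure.prod_swap, Measure.map_apply measurable_swap hAm]
    rw [hswap, hB0]
  -- choose a good translation vector v
  have hae : ∀ᵐ v : Euc d ∂volume, volume (Prod.mk v ⁻¹' A) = 0 := by
    filter_upwards [(Measure.measure_prod_null hAm).mp hA0] with v hv using hv
  obtain ⟨v, hvball, hv0⟩ :
      ∃ v ∈ Metric.ball (0 : Euc d) r, volume (Prod.mk v ⁻¹' A) = 0 := by
    by_contra hcon
    push_neg at hcon
    rw [ae_iff] at hae
    have hsub : Metric.ball (0 : Euc d) r ⊆ {v | ¬ volume (Prod.mk v ⁻¹' A) = 0} :=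
      fun v hv => hcon v hv
    have := measure_mono_null hsub hae
    exact absurd this (Metric.measure_ball_pos volume 0 hr).ne'
  have hvr : ‖v‖ < r := by simpa [mem_ball_zero_iff] using hvball
  -- the perturbed curve
  set ψ : ℝ → Euc d := fun t => φ t • v with hψdef
  have hψlip : LipschitzWith ‖v‖₊ ψ := by
    apply LipschitzWith.of_dist_le_mul
    intro s t
    rw [hψdef]
    simp only [dist_eq_norm, ← sub_smul, norm_smul, Real.norm_eq_abs]
    have h1 : |φ s - φ t| ≤ dist s t := by
      simpa [dist_eq_norm, Real.norm_eq_abs] using hφlip.dist_le_mul s t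
    calc |φ s - φ t| * ‖v‖ ≤ dist s t * ‖v‖ := by gcongr
      _ = (‖v‖₊ : ℝ) * dist s t := by rw [coe_nnnorm, mul_comm, dist_eq_norm]
  set γε : ℝ → Euc d := fun t => γ t + ψ t with hγεdef
  have hγεlip : LipschitzWith (K + ‖v‖₊) γε := hK.add hψlip
  have hψnorm : ∀ t : ℝ, ‖ψ t‖ ≤ ‖v‖ / 2 := by
    intro t
    rw [hψdef]
    simp only [norm_smul, Real.norm_eq_abs, abs_of_nonneg (hφnonneg t)]
    calc φ t * ‖v‖ ≤ (1/2) * ‖v‖ := by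
          apply mul_le_mul_of_nonneg_right (hφle t) (norm_nonneg v)
      _ = ‖v‖ / 2 := by ring
  refine ⟨γε, ⟨K + ‖v‖₊, hγεlip⟩, ?_, ?_, ?_, ?_, ?_⟩
  · -- stays in Ω
    intro t ht
    apply hδsub
    rw [Metric.mem_thickening_iff]
    refine ⟨γ t, mem_image_of_mem γ ht, ?_⟩
    have : dist (γε t) (γ t) = ‖ψ t‖ := by
      rw [dist_eq_norm, hγεdef]; simp
    rw [this]
    calc ‖ψ t‖ ≤ ‖v‖ / 2 := hψnorm t
      _ < r := by linarith [norm_nonneg v]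
      _ ≤ δ := min_le_left _ _
  · simp [hγεdef, hψdef, hφ0, h0]
  · simp [hγεdef, hψdef, hφ1, h1]
  · -- transversality
    have hT : volume {t : ℝ | t ∈ Ioo (0:ℝ) 1 ∧ γε t ∈ G} = 0 := by
      have : (Prod.mk v ⁻¹' A : Set ℝ) = {t : ℝ | t ∈ Ioo (0:ℝ) 1 ∧ γε t ∈ G} := by
        ext t; simp [hAdef, hγεdef, hψdef]
      rw [← this]; exact hv0
    set T : Set ℝ := {t : ℝ | t ∈ Ioo (0:ℝ) 1 ∧ γε t ∈ G} with hTdef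
    have hμT : (MeasureTheory.Measure.hausdorffMeasure (1:ℝ) : Measure ℝ) T = 0 := by
      rw [MeasureTheory.hausdorffMeasure_real]; exact hT
    have himg : (MeasureTheory.Measure.hausdorffMeasure (1:ℝ) : Measure (Euc d))
        (γε '' T) = 0 := by
      have := (LipschitzWith.lipschitzOnWith hγεlip (s := T)).hausdorffMeasure_image_le (zero_le_one)
      rw [hμT, mul_zero] at this
      exact le_antisymm this zero_le
    apply measure_mono_null _ himg
    rintro z ⟨⟨t, ht, rfl⟩, hzE⟩
    exact ⟨t, ⟨ht, hEG hzE⟩, rfl⟩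
  · -- W^{1,∞} estimates
    refine ⟨‖v‖ / 2, ‖v‖, ?_, ?_, ?_⟩
    · intro t ht
      have : γε t - γ t = ψ t := by simp [hγεdef]
      rw [this]; exact hψnorm t
    · have hγd := hK.ae_differentiableAt (μ := volume)
      have hψd := hψlip.ae_differentiableAt (μ := volume)
      filter_upwards [ae_restrict_of_ae (hγd.and hψd)] with t ht
      obtain ⟨h1d, h2d⟩ := ht
      have hd : deriv γε t = deriv γ t + deriv ψ t := by
        rw [hγεdef]; exact deriv_add h1d h2d
      rw [hd, add_sub_cancel_left]
      have hfd : deriv ψ t = fderiv ℝ ψ t 1 := rfl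
      calc ‖deriv ψ t‖ = ‖fderiv ℝ ψ t 1‖ := by rw [hfd]
        _ ≤ ‖fderiv ℝ ψ t‖ * ‖(1:ℝ)‖ := (fderiv ℝ ψ t).le_opNorm 1
        _ = ‖fderiv ℝ ψ t‖ := by simp
        _ ≤ ‖v‖₊ := norm_fderiv_le_of_lipschitz ℝ hψlip
    · have : r ≤ ε / 2 := min_le_right _ _
      have h0v : 0 ≤ ‖v‖ := norm_nonneg v
      linarith
end

section
/- Let λ ≥ 0. For all x, y ∈ Ω one has d_λ(x, y) = inf{ℓ(γ) : γ : [0,1] → Ω Lipschitz, γ(0) = x, γ(1) = y}, where ℓ(γ) := sup{Σ_{i=0}^{n−1} d_λ(γ(t_i), γ(t_{i+1})) : 0 = t_0 < t_1 < … < t_n = 1} is the d_λ-length of γ; that is, (Ω, d_λ) is a length space. -/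
open Set Filter Topology MeasureTheory
open scoped Pointwise ENNReal

noncomputable section Aux

namespace Stmt17Aux

variable {d : ℕ}

open scoped Classical in
/-- auxiliary function: `Lfun` cut off outside `Ω`. -/
def gfun (S : SupSetup d) (lam : ℝ) (z : Euc d × Euc d) : ℝ :=
  if z.1 ∈ S.Ω then Lfun S lam z.1 z.2 else 0

variable {S : SupSetup d} {lam : ℝ} {M : ℝ}

lemma zero_mem (hlam : 0 ≤ lam) {x : Euc d} (hx : x ∈ S.Ω) :
    (0 : Euc d) ∈ {p : Euc d | S.H x p ≤ lam} := by
  simp only [mem_setOf_eq, S.H_zero x hx]; exact hlam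

lemma img_nonempty (hlam : 0 ≤ lam) {x : Euc d} (hx : x ∈ S.Ω) (q : Euc d) :
    ((fun p : Euc d => (inner ℝ p q : ℝ)) '' {p : Euc d | S.H x p ≤ lam}).Nonempty :=
  ⟨_, mem_image_of_mem _ (zero_mem hlam hx)⟩

lemma img_bdd (hM : ∀ x ∈ S.Ω, ∀ p : Euc d, S.H x p ≤ lam → ‖p‖ ≤ M)
    {x : Euc d} (hx : x ∈ S.Ω) (q : Euc d) :
    ∀ r ∈ ((fun p : Euc d => (inner ℝ p q : ℝ)) '' {p : Euc d | S.H x p ≤ lam}), r ≤ M * ‖q‖ := by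
  rintro r ⟨p, hp, rfl⟩
  calc (inner ℝ p q : ℝ) ≤ ‖p‖ * ‖q‖ := real_inner_le_norm p q
    _ ≤ M * ‖q‖ := mul_le_mul_of_nonneg_right (hM x hx p hp) (norm_nonneg q)

lemma img_bddAbove (hM : ∀ x ∈ S.Ω, ∀ p : Euc d, S.H x p ≤ lam → ‖p‖ ≤ M)
    {x : Euc d} (hx : x ∈ S.Ω) (q : Euc d) :
    BddAbove ((fun p : Euc d => (inner ℝ p q : ℝ)) '' {p : Euc d | S.H x p ≤ lam}) :=
  ⟨M * ‖q‖, fun r hr => img_bdd hM hx q r hr⟩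

lemma Lfun_nonneg (hlam : 0 ≤ lam) (hM : ∀ x ∈ S.Ω, ∀ p : Euc d, S.H x p ≤ lam → ‖p‖ ≤ M)
    {x : Euc d} (hx : x ∈ S.Ω) (q : Euc d) : 0 ≤ Lfun S lam x q := by
  have h := le_csSup (img_bddAbove hM hx q) (mem_image_of_mem _ (zero_mem hlam hx))
  rwa [inner_zero_left] at h

lemma Lfun_le (hlam : 0 ≤ lam) (hM : ∀ x ∈ S.Ω, ∀ p : Euc d, S.H x p ≤ lam → ‖p‖ ≤ M)
    {x : Euc d} (hx : x ∈ S.Ω) (q : Euc d) : Lfun S lam x q ≤ M * ‖q‖ :=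
  csSup_le (img_nonempty hlam hx q) (img_bdd hM hx q)

lemma Lfun_smul (hlam : 0 ≤ lam) (hM : ∀ x ∈ S.Ω, ∀ p : Euc d, S.H x p ≤ lam → ‖p‖ ≤ M)
    {x : Euc d} (hx : x ∈ S.Ω) (q : Euc d) {c : ℝ} (hc : 0 ≤ c) :
    Lfun S lam x (c • q) = c * Lfun S lam x q := by
  have himg : (fun p : Euc d => (inner ℝ p (c • q) : ℝ)) '' {p : Euc d | S.H x p ≤ lam}
      = (fun r : ℝ => c * r) '' ((fun p : Euc d => (inner ℝ p q : ℝ)) '' {p : Euc d | S.H x p ≤ lam}) := by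
    rw [← Set.image_comp]
    apply Set.image_congr
    intro p _
    show (inner ℝ p (c • q) : ℝ) = c * (inner ℝ p q : ℝ)
    exact real_inner_smul_right p q c
  rw [Lfun, himg, Lfun]
  exact (Monotone.map_csSup_of_continuousAt (by fun_prop)
    (fun a b hab => mul_le_mul_of_nonneg_left hab hc)
    (img_nonempty hlam hx q) (img_bddAbove hM hx q)).symm

lemma gfun_nonneg (hlam : 0 ≤ lam) (hM : ∀ x ∈ S.Ω, ∀ p : Euc d, S.H x p ≤ lam → ‖p‖ ≤ M)
    (z : Euc d × Euc d) : 0 ≤ gfun S lam z := by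
  unfold gfun; split_ifs with h
  · exact Lfun_nonneg hlam hM h _
  · exact le_refl 0

lemma gfun_le (hlam : 0 ≤ lam) (hM : ∀ x ∈ S.Ω, ∀ p : Euc d, S.H x p ≤ lam → ‖p‖ ≤ M)
    (hM0 : 0 ≤ M) (z : Euc d × Euc d) : gfun S lam z ≤ M * ‖z.2‖ := by
  unfold gfun; split_ifs with h
  · exact Lfun_le hlam hM h _
  · positivity

lemma Lfun_usc (hlam : 0 ≤ lam) (hM0 : 0 ≤ M)
    (hM : ∀ x ∈ S.Ω, ∀ p : Euc d, S.H x p ≤ lam → ‖p‖ ≤ M)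
    {x₀ q₀ : Euc d} {c : ℝ} (hx : x₀ ∈ S.Ω) (hc : Lfun S lam x₀ q₀ < c) :
    ∀ᶠ z : Euc d × Euc d in 𝓝 (x₀, q₀), z.1 ∈ S.Ω → Lfun S lam z.1 z.2 < c := by
  set c' : ℝ := (Lfun S lam x₀ q₀ + c) / 2 with hc'def
  have hc'1 : Lfun S lam x₀ q₀ < c' := by rw [hc'def]; linarith
  have hc'2 : c' < c := by rw [hc'def]; linarith
  set C : Set (Euc d) := Metric.closedBall 0 M ∩ {p : Euc d | c' ≤ (inner ℝ p q₀ : ℝ)} with hCdef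
  have hCcomp : IsCompact C := by
    apply (isCompact_closedBall (0 : Euc d) M).inter_right
    exact isClosed_le continuous_const (Continuous.inner continuous_id continuous_const)
  have hHC : ∀ p ∈ C, lam < S.H x₀ p := by
    intro p hp
    by_contra h
    push_neg at h
    have h1 : (inner ℝ p q₀ : ℝ) ≤ Lfun S lam x₀ q₀ :=
      le_csSup (img_bddAbove hM hx q₀) (mem_image_of_mem _ h)
    have h2 : c' ≤ (inner ℝ p q₀ : ℝ) := hp.2
    linarith
  have hev : ∀ᶠ x in 𝓝 x₀, ∀ p ∈ C, lam < S.H x p := by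
    apply hCcomp.eventually_forall_of_forall_eventually
    intro p hp
    have hmem : S.Ω ×ˢ (univ : Set (Euc d)) ∈ 𝓝 (x₀, p) :=
      (S.isOpen_Ω.prod isOpen_univ).mem_nhds ⟨hx, trivial⟩
    have hcont : ContinuousAt (fun z : Euc d × Euc d => S.H z.1 z.2) (x₀, p) :=
      (S.H_cont (x₀, p) ⟨hx, trivial⟩).continuousAt hmem
    exact hcont.eventually (eventually_gt_nhds (hHC p hp))
  obtain ⟨s, hs, hsP⟩ := hev.exists_mem
  set ρ : ℝ := (c - c') / (M + 1) with hρdef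
  have hρ : 0 < ρ := by apply div_pos <;> linarith
  have hprod : s ×ˢ Metric.ball q₀ ρ ∈ 𝓝 (x₀, q₀) :=
    prod_mem_nhds hs (Metric.ball_mem_nhds _ hρ)
  filter_upwards [hprod] with z hz hzΩ
  obtain ⟨hz1, hz2⟩ := hz
  have hkey : Lfun S lam z.1 z.2 ≤ c' + M * ρ := by
    apply csSup_le (img_nonempty hlam hzΩ z.2)
    rintro r ⟨p, hp, rfl⟩
    have hpM : ‖p‖ ≤ M := hM z.1 hzΩ p hp
    have hpC : p ∉ C := by
      intro hpC
      exact absurd hp (not_le.2 (hsP z.1 hz1 p hpC))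
    have h1 : (inner ℝ p q₀ : ℝ) < c' := by
      by_contra h
      push_neg at h
      exact hpC ⟨mem_closedBall_zero_iff.2 hpM, h⟩
    have h2 : (inner ℝ p z.2 : ℝ) = (inner ℝ p q₀ : ℝ) + (inner ℝ p (z.2 - q₀) : ℝ) := by
      rw [← inner_add_right]
      congr 1
      abel
    have h3 : (inner ℝ p (z.2 - q₀) : ℝ) ≤ M * ρ := by
      calc (inner ℝ p (z.2 - q₀) : ℝ) ≤ ‖p‖ * ‖z.2 - q₀‖ := real_inner_le_norm _ _
        _ ≤ M * ρ := by
            apply mul_le_mul hpM _ (norm_nonneg _) hM0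
            rw [← dist_eq_norm]
            exact (Metric.mem_ball.1 hz2).le
    linarith
  have hMρ : M * ρ < c - c' := by
    have h1 : (M + 1) * ρ = c - c' := by
      rw [hρdef]; field_simp
    nlinarith
  linarith

lemma isOpen_sub (hlam : 0 ≤ lam) (hM0 : 0 ≤ M)
    (hM : ∀ x ∈ S.Ω, ∀ p : Euc d, S.H x p ≤ lam → ‖p‖ ≤ M) (c : ℝ) :
    IsOpen {z : Euc d × Euc d | z.1 ∈ S.Ω ∧ Lfun S lam z.1 z.2 < c} := by
  rw [isOpen_iff_eventually]
  rintro z ⟨hz1, hz2⟩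
  have h1 := Lfun_usc hlam hM0 hM hz1 hz2
  have h2 : ∀ᶠ w : Euc d × Euc d in 𝓝 z, w.1 ∈ S.Ω :=
    (S.isOpen_Ω.preimage continuous_fst).eventually_mem hz1
  filter_upwards [h1, h2] with w hw1 hw2
  exact ⟨hw2, hw1 hw2⟩

lemma measurable_gfun (hlam : 0 ≤ lam) (hM0 : 0 ≤ M)
    (hM : ∀ x ∈ S.Ω, ∀ p : Euc d, S.H x p ≤ lam → ‖p‖ ≤ M) :
    Measurable (gfun S lam) := by
  apply measurable_of_Iio
  intro c
  have heq : gfun S lam ⁻¹' Iio c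
      = {z : Euc d × Euc d | z.1 ∈ S.Ω ∧ Lfun S lam z.1 z.2 < c}
        ∪ {z : Euc d × Euc d | z.1 ∉ S.Ω ∧ 0 < c} := by
    ext z
    by_cases hz : z.1 ∈ S.Ω <;> simp [gfun, hz]
  rw [heq]
  apply MeasurableSet.union (isOpen_sub hlam hM0 hM c).measurableSet
  have : {z : Euc d × Euc d | z.1 ∉ S.Ω ∧ 0 < c}
      = (Prod.fst ⁻¹' S.Ωᶜ) ∩ {z : Euc d × Euc d | 0 < c} := rfl
  rw [this]
  exact (measurable_fst S.isOpen_Ω.measurableSet.compl).inter (MeasurableSet.const _)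

lemma Lfun_zero (hlam : 0 ≤ lam) (hM : ∀ x ∈ S.Ω, ∀ p : Euc d, S.H x p ≤ lam → ‖p‖ ≤ M)
    {x : Euc d} (hx : x ∈ S.Ω) : Lfun S lam x 0 = 0 := by
  refine le_antisymm ?_ (Lfun_nonneg hlam hM hx 0)
  have h := Lfun_le hlam hM hx 0
  simpa using h

lemma measurable_f₀ (hlam : 0 ≤ lam) (hM0 : 0 ≤ M)
    (hM : ∀ x ∈ S.Ω, ∀ p : Euc d, S.H x p ≤ lam → ‖p‖ ≤ M)
    {γ : ℝ → Euc d} {K : NNReal} (hγK : LipschitzWith K γ) :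
    Measurable (fun t : ℝ => gfun S lam (γ t, deriv γ t)) :=
  (measurable_gfun hlam hM0 hM).comp ((hγK.continuous.measurable).prodMk (measurable_deriv γ))

lemma norm_deriv_le {γ : ℝ → Euc d} {K : NNReal} (hγK : LipschitzWith K γ) (t : ℝ) :
    ‖deriv γ t‖ ≤ K := by
  have h1 : ‖fderiv ℝ γ t‖ ≤ K := norm_fderiv_le_of_lipschitz ℝ hγK
  have h2 : deriv γ t = fderiv ℝ γ t 1 := (fderiv_apply_one_eq_deriv).symm
  rw [h2]
  calc ‖fderiv ℝ γ t 1‖ ≤ ‖fderiv ℝ γ t‖ * ‖(1:ℝ)‖ := (fderiv ℝ γ t).le_opNorm 1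
    _ ≤ K := by rw [norm_one, mul_one]; exact h1

lemma integrableOn_f₀ (hlam : 0 ≤ lam) (hM0 : 0 ≤ M)
    (hM : ∀ x ∈ S.Ω, ∀ p : Euc d, S.H x p ≤ lam → ‖p‖ ≤ M)
    {γ : ℝ → Euc d} {K : NNReal} (hγK : LipschitzWith K γ) (a b : ℝ) :
    IntegrableOn (fun t : ℝ => gfun S lam (γ t, deriv γ t)) (Ioo a b) := by
  apply Integrable.mono' (g := fun _ => M * K)
    (integrableOn_const measure_Ioo_lt_top.ne)
    ((measurable_f₀ hlam hM0 hM hγK).aestronglyMeasurable)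
  apply ae_of_all
  intro t
  rw [Real.norm_eq_abs, abs_of_nonneg (gfun_nonneg hlam hM _)]
  calc gfun S lam (γ t, deriv γ t) ≤ M * ‖deriv γ t‖ := gfun_le hlam hM hM0 _
    _ ≤ M * K := mul_le_mul_of_nonneg_left (norm_deriv_le hγK t) hM0

lemma seg (hlam : 0 ≤ lam) (hM0 : 0 ≤ M)
    (hM : ∀ x ∈ S.Ω, ∀ p : Euc d, S.H x p ≤ lam → ‖p‖ ≤ M)
    {γ : ℝ → Euc d} {K : NNReal} (hγK : LipschitzWith K γ)
    (hγΩ : ∀ t ∈ Icc (0:ℝ) 1, γ t ∈ S.Ω)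
    {a b : ℝ} (hab : a ≤ b) (ha : a ∈ Icc (0:ℝ) 1) (hb : b ∈ Icc (0:ℝ) 1) :
    pdist S lam (γ a) (γ b)
      ≤ ∫⁻ t in Ioo a b, ENNReal.ofReal (gfun S lam (γ t, deriv γ t)) := by
  rcases eq_or_lt_of_le hab with rfl | hab'
  · have hpath : IsPathIn S.Ω (γ a) (γ a) (fun _ => γ a) :=
      ⟨⟨0, LipschitzWith.const _⟩, fun t _ => hγΩ a ha, rfl, rfl⟩
    have henergy : energy S lam (fun _ => γ a) = 0 := by
      unfold energy
      have heq : EqOn (fun t => Lfun S lam ((fun _ => γ a) t) (deriv (fun _ => γ a) t))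
          (fun _ => (0:ℝ)) (Ioo (0:ℝ) 1) := by
        intro t _
        show Lfun S lam (γ a) (deriv (fun _ => γ a) t) = 0
        rw [deriv_const]
        exact Lfun_zero hlam hM (hγΩ a ha)
      rw [setIntegral_congr_fun measurableSet_Ioo heq]
      simp
    have hle : pdist S lam (γ a) (γ a) ≤ ENNReal.ofReal (energy S lam (fun _ => γ a)) := by
      rw [pdist]; exact iInf_le_of_le _ (iInf_le _ hpath)
    calc pdist S lam (γ a) (γ a) ≤ ENNReal.ofReal (energy S lam (fun _ => γ a)) := hle
      _ = 0 := by rw [henergy]; simp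
      _ ≤ _ := zero_le'
  · set cc : ℝ := b - a with hccdef
    have hcc : 0 < cc := by rw [hccdef]; linarith
    set φ : ℝ → ℝ := fun t => a + cc * t with hφdef
    set σ : ℝ → Euc d := fun t => γ (φ t) with hσdef
    have hφmem : ∀ t ∈ Icc (0:ℝ) 1, φ t ∈ Icc (0:ℝ) 1 := by
      intro t ht
      have h1 : a ≤ φ t := by
        show a ≤ a + cc * t
        nlinarith [ht.1, ht.2]
      have h2 : φ t ≤ b := by
        show a + cc * t ≤ b
        nlinarith [ht.1, ht.2]
      exact ⟨le_trans ha.1 h1, le_trans h2 hb.2⟩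
    have hφlip : LipschitzWith (Real.toNNReal cc) φ := by
      apply LipschitzWith.of_dist_le_mul
      intro s t
      rw [Real.dist_eq, Real.dist_eq]
      have h : φ s - φ t = cc * (s - t) := by show (a + cc * s) - (a + cc * t) = cc * (s - t); ring
      rw [h, abs_mul, Real.coe_toNNReal _ hcc.le, abs_of_nonneg hcc.le]
    have hσpath : IsPathIn S.Ω (γ a) (γ b) σ := by
      refine ⟨⟨K * Real.toNNReal cc, hγK.comp hφlip⟩, fun t ht => hγΩ _ (hφmem t ht), ?_, ?_⟩
      · show γ (φ 0) = γ a
        have h0 : φ 0 = a := by simp only [hφdef]; ring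
        rw [h0]
      · show γ (φ 1) = γ b
        have h1 : φ 1 = b := by simp only [hφdef, hccdef]; ring
        rw [h1]
    have hder : ∀ t : ℝ, deriv σ t = cc • deriv γ (φ t) := by
      intro t
      have hφd : HasDerivAt φ cc t := by
        have h := ((hasDerivAt_id t).const_mul cc).const_add a
        rw [mul_one] at h
        exact h
      by_cases hdiff : DifferentiableAt ℝ γ (φ t)
      · have h3 : HasDerivAt (γ ∘ φ) (cc • deriv γ (φ t)) t :=
          HasDerivAt.scomp (h := φ) (x := t) hdiff.hasDerivAt hφd
        exact h3.deriv
      · rw [deriv_zero_of_not_differentiableAt hdiff, smul_zero]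
        apply deriv_zero_of_not_differentiableAt
        intro hσd
        apply hdiff
        have hψ : DifferentiableAt ℝ (fun s : ℝ => (s - a) / cc) (φ t) := by fun_prop
        have hγeq : γ = σ ∘ fun s : ℝ => (s - a) / cc := by
          funext s
          show γ s = γ (φ ((s - a) / cc))
          have h4 : φ ((s - a) / cc) = s := by
            simp only [hφdef]
            field_simp
            ring
          rw [h4]
        rw [hγeq]
        have hψφ : ((φ t) - a) / cc = t := by
          simp only [hφdef]
          field_simp
          ring
        exact DifferentiableAt.comp (φ t) (by rw [hψφ]; exact hσd) hψ
    have henergy : energy S lam σ = ∫ t in Ioo a b, gfun S lam (γ t, deriv γ t) := by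
      unfold energy
      rw [← integral_Ioc_eq_integral_Ioo]
      have heq : EqOn (fun t => Lfun S lam (σ t) (deriv σ t))
          (fun t => cc * gfun S lam (γ (φ t), deriv γ (φ t))) (Ioc (0:ℝ) 1) := by
        intro t ht
        have hmem : φ t ∈ Icc (0:ℝ) 1 := hφmem t ⟨ht.1.le, ht.2⟩
        have hΩ : γ (φ t) ∈ S.Ω := hγΩ _ hmem
        show Lfun S lam (σ t) (deriv σ t) = cc * gfun S lam (γ (φ t), deriv γ (φ t))
        rw [hder t]
        show Lfun S lam (γ (φ t)) (cc • deriv γ (φ t)) = _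
        rw [Lfun_smul hlam hM hΩ _ hcc.le]
        congr 1
        simp [gfun, hΩ]
      rw [setIntegral_congr_fun measurableSet_Ioc heq,
        ← intervalIntegral.integral_of_le zero_le_one,
        intervalIntegral.integral_const_mul]
      have hcv := intervalIntegral.smul_integral_comp_add_mul
        (a := (0:ℝ)) (b := (1:ℝ)) (fun s => gfun S lam (γ s, deriv γ s)) cc a
      rw [smul_eq_mul] at hcv
      rw [hcv]
      have he1 : a + cc * 0 = a := by ring
      have he2 : a + cc * 1 = b := by rw [hccdef]; ring
      rw [he1, he2, intervalIntegral.integral_of_le hab, integral_Ioc_eq_integral_Ioo]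
    have hle : pdist S lam (γ a) (γ b) ≤ ENNReal.ofReal (energy S lam σ) := by
      rw [pdist]; exact iInf_le_of_le σ (iInf_le _ hσpath)
    calc pdist S lam (γ a) (γ b) ≤ ENNReal.ofReal (energy S lam σ) := hle
      _ = _ := by
          rw [henergy]
          exact ofReal_integral_eq_lintegral_ofReal (integrableOn_f₀ hlam hM0 hM hγK a b)
            (ae_of_all _ fun t => gfun_nonneg hlam hM _)

lemma dlen_le (hlam : 0 ≤ lam) (hM0 : 0 ≤ M)
    (hM : ∀ x ∈ S.Ω, ∀ p : Euc d, S.H x p ≤ lam → ‖p‖ ≤ M)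
    {x y : Euc d} {γ : ℝ → Euc d} (hγ : IsPathIn S.Ω x y γ) :
    dlenIn S lam γ ≤ ENNReal.ofReal (energy S lam γ) := by
  obtain ⟨⟨K, hγK⟩, hγΩ, hγ0, hγ1⟩ := hγ
  have hkey : ENNReal.ofReal (energy S lam γ)
      = ∫⁻ t in Ioo (0:ℝ) 1, ENNReal.ofReal (gfun S lam (γ t, deriv γ t)) := by
    have heq : energy S lam γ = ∫ t in Ioo (0:ℝ) 1, gfun S lam (γ t, deriv γ t) := by
      unfold energy
      apply setIntegral_congr_fun measurableSet_Ioo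
      intro t ht
      have hΩ : γ t ∈ S.Ω := hγΩ t ⟨ht.1.le, ht.2.le⟩
      simp [gfun, hΩ]
    rw [heq]
    exact ofReal_integral_eq_lintegral_ofReal (integrableOn_f₀ hlam hM0 hM hγK 0 1)
      (ae_of_all _ fun t => gfun_nonneg hlam hM _)
  rw [dlenIn, hkey]
  refine iSup_le fun n => iSup_le fun t => iSup_le fun hmono => iSup_le fun ht0 =>
    iSup_le fun ht1 => ?_
  have hmem : ∀ j : Fin (n+1), t j ∈ Icc (0:ℝ) 1 := fun j =>
    ⟨ht0 ▸ hmono (Fin.zero_le j), ht1 ▸ hmono (Fin.le_last j)⟩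
  have hdisj : Pairwise (Function.onFun Disjoint
      fun i : Fin n => Ioo (t i.castSucc) (t i.succ)) := by
    have hkey2 : ∀ i j : Fin n, i < j →
        Disjoint (Ioo (t i.castSucc) (t i.succ)) (Ioo (t j.castSucc) (t j.succ)) := by
      intro i j h
      apply Set.disjoint_left.2
      intro s hs1 hs2
      have h1 : (i.succ : Fin (n+1)) ≤ j.castSucc := by
        rw [Fin.le_def]
        rw [Fin.lt_def] at h
        simp only [Fin.val_succ, Fin.coe_castSucc]
        omega
      have h2 : s < t i.succ := hs1.2
      have h3 : t i.succ ≤ t j.castSucc := hmono h1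
      have h4 : t j.castSucc < s := hs2.1
      linarith
    intro i j hij
    rcases hij.lt_or_gt with h | h
    · exact hkey2 i j h
    · exact (hkey2 j i h).symm
  calc ∑ i : Fin n, pdist S lam (γ (t i.castSucc)) (γ (t i.succ))
      ≤ ∑ i : Fin n, ∫⁻ s in Ioo (t i.castSucc) (t i.succ),
          ENNReal.ofReal (gfun S lam (γ s, deriv γ s)) := by
        apply Finset.sum_le_sum
        intro i _
        exact seg hlam hM0 hM hγK hγΩ (hmono i.castSucc_le_succ) (hmem _) (hmem _)
    _ = ∫⁻ s in ⋃ i : Fin n, Ioo (t i.castSucc) (t i.succ),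
          ENNReal.ofReal (gfun S lam (γ s, deriv γ s)) := by
        rw [lintegral_iUnion (fun i => measurableSet_Ioo) hdisj]
        exact (tsum_fintype _).symm
    _ ≤ ∫⁻ s in Ioo (0:ℝ) 1, ENNReal.ofReal (gfun S lam (γ s, deriv γ s)) :=
        lintegral_mono_set
          (Set.iUnion_subset fun i => Set.Ioo_subset_Ioo (hmem i.castSucc).1 (hmem i.succ).2)

end Stmt17Aux

end Aux

/-- `(Ω, d_λ)` is a length space: `d_λ(x,y)` equals the infimum of the
`d_λ`-lengths of Lipschitz curves in `Ω` joining `x` to `y`. -/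
theorem stmt17 {d : ℕ} (S : SupSetup d) (lam : ℝ) (hlam : 0 ≤ lam)
    (x y : Euc d) (hx : x ∈ S.Ω) (hy : y ∈ S.Ω) :
    pdist S lam x y
      = ⨅ (γ : ℝ → Euc d) (_ : IsPathIn S.Ω x y γ), dlenIn S lam γ := by
  obtain ⟨M, hM0, hM⟩ := S.H_coercive lam
  apply le_antisymm
  · refine le_iInf fun γ => le_iInf fun hγ => ?_
    obtain ⟨-, -, hγ0, hγ1⟩ := hγ
    set t : Fin 2 → ℝ := ![0, 1] with htdef
    have hmono : Monotone t := by
      intro i j hij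
      fin_cases i <;> fin_cases j <;> simp_all [htdef] <;> exact zero_le_one
    have h1 : pdist S lam x y
        = ∑ i : Fin 1, pdist S lam (γ (t i.castSucc)) (γ (t i.succ)) := by
      rw [Fin.sum_univ_one]
      show pdist S lam x y = pdist S lam (γ (t 0)) (γ (t 1))
      rw [show t 0 = (0:ℝ) from rfl, show t 1 = (1:ℝ) from rfl, hγ0, hγ1]
    rw [h1, dlenIn]
    exact le_iSup_of_le 1 (le_iSup_of_le t (le_iSup_of_le hmono
      (le_iSup_of_le rfl (le_iSup_of_le rfl le_rfl))))
  · rw [pdist]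
    refine le_iInf fun σ => le_iInf fun hσ => ?_
    refine iInf_le_of_le σ (iInf_le_of_le hσ ?_)
    exact Stmt17Aux.dlen_le hlam hM0 hM hσ
end
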